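/- arXiv:math/0311228 — 3 statements merged into one kernel-verified Lean document; each statement's English description precedes it below -/
import Mathlib

section
/- Let Γ be a uniformly discontinuous group of isometries of ℝ² with constant d. Then the quotient pseudometric on ℝ²/Γ, defined by dist(Γ·A, Γ·B) = inf over A' ∈ Γ·A, B' ∈ Γ·B of dist(A', B'), is a metric, and the infimum is attained. -/
noncomputable section

def orb (Γ : Subgroup (EuclideanSpace ℝ (Fin 2) ≃ᵢ EuclideanSpace ℝ (Fin 2)))
    (A : EuclideanSpace ℝ (Fin 2)) : Set (EuclideanSpace ℝ (Fin 2)) :=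
  {x | ∃ γ ∈ Γ, γ A = x}

def qdist (Γ : Subgroup (EuclideanSpace ℝ (Fin 2) ≃ᵢ EuclideanSpace ℝ (Fin 2)))
    (A B : EuclideanSpace ℝ (Fin 2)) : ℝ :=
  sInf {r : ℝ | ∃ A' ∈ orb Γ A, ∃ B' ∈ orb Γ B, r = dist A' B'}

open Metric

variable {Γ : Subgroup (EuclideanSpace ℝ (Fin 2) ≃ᵢ EuclideanSpace ℝ (Fin 2))}

lemma mem_orb_self (A : EuclideanSpace ℝ (Fin 2)) : A ∈ orb Γ A := ⟨1, one_mem Γ, rfl⟩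

lemma orb_eq_of_mem {A A' : EuclideanSpace ℝ (Fin 2)} (h : A' ∈ orb Γ A) :
    orb Γ A' = orb Γ A := by
  obtain ⟨γ, hγ, rfl⟩ := h
  ext x
  constructor
  · rintro ⟨δ, hδ, rfl⟩; exact ⟨δ * γ, mul_mem hδ hγ, rfl⟩
  · rintro ⟨δ, hδ, rfl⟩
    exact ⟨δ * γ⁻¹, mul_mem hδ (inv_mem hγ), by simp⟩

lemma orb_sep {B : EuclideanSpace ℝ (Fin 2)} {d : ℝ}
    (hud : ∀ γ ∈ Γ, ∀ P : EuclideanSpace ℝ (Fin 2), γ P ≠ P → d ≤ dist P (γ P))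
    {x y : EuclideanSpace ℝ (Fin 2)} (hx : x ∈ orb Γ B) (hy : y ∈ orb Γ B)
    (hxy : x ≠ y) : d ≤ dist x y := by
  obtain ⟨γ, hγ, rfl⟩ := hx
  obtain ⟨δ, hδ, rfl⟩ := hy
  have h1 : dist (γ B) (δ B) = dist B ((γ⁻¹ * δ) B) := by
    simp only [IsometryEquiv.coe_mul, Function.comp_apply]
    rw [← IsometryEquiv.dist_eq γ⁻¹ (γ B) (δ B)]
    simp
  rw [h1]
  apply hud _ (mul_mem (inv_mem hγ) hδ)
  intro hc
  apply hxy
  have : γ ((γ⁻¹ * δ) B) = γ B := by rw [hc]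
  simpa using this.symm

lemma orb_closed {B : EuclideanSpace ℝ (Fin 2)} {d : ℝ} (hd : 0 < d)
    (hud : ∀ γ ∈ Γ, ∀ P : EuclideanSpace ℝ (Fin 2), γ P ≠ P → d ≤ dist P (γ P)) :
    IsClosed (orb Γ B) := by
  rw [← isOpen_compl_iff]
  -- alternative: closure subset
  rw [isOpen_compl_iff, ← closure_subset_iff_isClosed]
  intro x hx
  rw [Metric.mem_closure_iff] at hx
  obtain ⟨y0, hy0, hy0d⟩ := hx (d/2) (by linarith)
  have key : ∀ ε > 0, dist x y0 ≤ ε := by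
    intro ε hε
    obtain ⟨y, hy, hyd⟩ := hx (min ε (d/2)) (lt_min hε (by linarith))
    have : y = y0 := by
      by_contra hne
      have := orb_sep hud hy hy0 hne
      have h2 : dist y y0 ≤ dist x y + dist x y0 := dist_triangle_left _ _ _
      have h3 : dist x y < d/2 := lt_of_lt_of_le hyd (min_le_right _ _)
      linarith
    subst this
    exact le_trans hyd.le (min_le_left _ _)
  have : x = y0 := eq_of_forall_dist_le key
  rw [this]; exact hy0

lemma qdist_nonempty (A B : EuclideanSpace ℝ (Fin 2)) :
    {r : ℝ | ∃ A' ∈ orb Γ A, ∃ B' ∈ orb Γ B, r = dist A' B'}.Nonempty :=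
  ⟨dist A B, A, mem_orb_self A, B, mem_orb_self B, rfl⟩

lemma qdist_bdd (A B : EuclideanSpace ℝ (Fin 2)) :
    BddBelow {r : ℝ | ∃ A' ∈ orb Γ A, ∃ B' ∈ orb Γ B, r = dist A' B'} := by
  refine ⟨0, fun r hr => ?_⟩
  obtain ⟨A', _, B', _, rfl⟩ := hr
  exact dist_nonneg

lemma qdist_eq_infDist (A B : EuclideanSpace ℝ (Fin 2)) :
    qdist Γ A B = infDist A (orb Γ B) := by
  apply le_antisymm
  · by_contra h
    push_neg at h
    obtain ⟨y, hy, hyd⟩ := (infDist_lt_iff ⟨B, mem_orb_self B⟩).mp h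
    exact absurd (csInf_le (qdist_bdd A B) ⟨A, mem_orb_self A, y, hy, rfl⟩)
      (not_le.mpr hyd)
  · apply le_csInf (qdist_nonempty A B)
    rintro r ⟨A', ⟨α, hα, rfl⟩, B', hB', rfl⟩
    have h1 : dist (α A) B' = dist A (α⁻¹ B') := by
      rw [← IsometryEquiv.dist_eq α⁻¹ (α A) B']; simp
    rw [h1]
    apply infDist_le_dist_of_mem
    obtain ⟨β, hβ, rfl⟩ := hB'
    exact ⟨α⁻¹ * β, mul_mem (inv_mem hα) hβ, rfl⟩

/-- For a uniformly discontinuous group `Γ` of isometries of the plane, the quotient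
pseudometric on `ℝ²/Γ` is attained and is a genuine metric: it vanishes exactly on equal
orbits, is symmetric, and satisfies the triangle inequality. -/
theorem quotient_metric
    (Γ : Subgroup (EuclideanSpace ℝ (Fin 2) ≃ᵢ EuclideanSpace ℝ (Fin 2)))
    (d : ℝ) (hd : 0 < d)
    (hud : ∀ γ ∈ Γ, ∀ P : EuclideanSpace ℝ (Fin 2), γ P ≠ P → d ≤ dist P (γ P))
    (A B C : EuclideanSpace ℝ (Fin 2)) :
    (∃ A' ∈ orb Γ A, ∃ B' ∈ orb Γ B, dist A' B' = qdist Γ A B) ∧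
    (qdist Γ A B = 0 ↔ orb Γ A = orb Γ B) ∧
    qdist Γ A B = qdist Γ B A ∧
    qdist Γ A C ≤ qdist Γ A B + qdist Γ B C := by
  have attain : ∀ X Y : EuclideanSpace ℝ (Fin 2),
      ∃ A' ∈ orb Γ X, ∃ B' ∈ orb Γ Y, dist A' B' = qdist Γ X Y := by
    intro X Y
    obtain ⟨y0, hy0, hy0d⟩ := (orb_closed hd hud (B := Y)).exists_infDist_eq_dist
      ⟨Y, mem_orb_self Y⟩ X
    exact ⟨X, mem_orb_self X, y0, hy0, by rw [qdist_eq_infDist, hy0d]⟩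
  have nonneg : ∀ X Y : EuclideanSpace ℝ (Fin 2), 0 ≤ qdist Γ X Y := by
    intro X Y
    apply le_csInf (qdist_nonempty X Y)
    rintro r ⟨_, _, _, _, rfl⟩; exact dist_nonneg
  refine ⟨attain A B, ⟨?_, ?_⟩, ?_, ?_⟩
  · intro h0
    obtain ⟨A', hA', B', hB', hAB⟩ := attain A B
    have : A' = B' := by
      rw [← dist_eq_zero]; rw [hAB, h0]
    rw [← orb_eq_of_mem hA', this, orb_eq_of_mem hB']
  · intro h
    apply le_antisymm _ (nonneg A B)
    have hAB : A ∈ orb Γ B := h ▸ mem_orb_self A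
    have : (0 : ℝ) ∈ {r : ℝ | ∃ A' ∈ orb Γ A, ∃ B' ∈ orb Γ B, r = dist A' B'} :=
      ⟨A, mem_orb_self A, A, hAB, (dist_self A).symm⟩
    exact csInf_le (qdist_bdd A B) this
  · unfold qdist
    congr 1
    ext r
    constructor
    · rintro ⟨A', hA', B', hB', rfl⟩; exact ⟨B', hB', A', hA', dist_comm _ _⟩
    · rintro ⟨B', hB', A', hA', rfl⟩; exact ⟨A', hA', B', hB', dist_comm _ _⟩
  · obtain ⟨A', hA', B', hB', h1⟩ := attain A B
    obtain ⟨B'', hB'', C'', hC'', h2⟩ := attain B C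
    obtain ⟨β, hβ, hβe⟩ := hB'
    obtain ⟨β', hβ', hβ'e⟩ := hB''
    set γ : EuclideanSpace ℝ (Fin 2) ≃ᵢ EuclideanSpace ℝ (Fin 2) := β * β'⁻¹ with hγdef
    have hγ : γ ∈ Γ := mul_mem hβ (inv_mem hβ')
    have hγB : γ B'' = B' := by
      rw [← hβ'e, ← hβe]; simp [hγdef]
    have hγC : γ C'' ∈ orb Γ C := by
      obtain ⟨δ, hδ, rfl⟩ := hC''
      exact ⟨γ * δ, mul_mem hγ hδ, rfl⟩
    have hle : qdist Γ A C ≤ dist A' (γ C'') :=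
      csInf_le (qdist_bdd A C) ⟨A', hA', γ C'', hγC, rfl⟩
    have htri : dist A' (γ C'') ≤ dist A' (γ B'') + dist (γ B'') (γ C'') :=
      dist_triangle _ _ _
    rw [γ.dist_eq, hγB] at htri
    rw [← h1, ← h2]
    exact hle.trans htri

end
end

section
/- On the flat cylinder ℝ²/⟨translation by vector a⟩, a geodesic arc that lifts to a planar segment is a shortest path (i.e., realizes the quotient distance between its endpoints) if and only if the projection of its lift onto the direction of a has length at most |a|/2. -/
open scoped RealInnerProductSpace

/-!
With `v = x - y`, expanding `‖v - k • a‖² = ‖v‖² - 2k⟪v, a⟫ + k²‖a‖²`, the segment is shortest iff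
`2k⟪v, a⟫ ≤ k²‖a‖²` for every integer `k`. The cases `k = ±1` give `2|⟪v, a⟫| ≤ ‖a‖²`, and this
suffices for all `k` because `|k| ≤ k²` on the integers.
-/

section InnerProductSpace

variable {E : Type*} [NormedAddCommGroup E] [InnerProductSpace ℝ E]

theorem norm_sub_smul_sq (v a : E) (r : ℝ) :
    ‖v - r • a‖ ^ 2 = ‖v‖ ^ 2 - 2 * r * ⟪v, a⟫ + r ^ 2 * ‖a‖ ^ 2 := by
  rw [norm_sub_sq_real, real_inner_smul_right, norm_smul, Real.norm_eq_abs, mul_pow, sq_abs]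
  ring

theorem norm_le_norm_sub_smul_iff (v a : E) (r : ℝ) :
    ‖v‖ ≤ ‖v - r • a‖ ↔ 2 * r * ⟪v, a⟫ ≤ r ^ 2 * ‖a‖ ^ 2 := by
  rw [← sq_le_sq₀ (norm_nonneg _) (norm_nonneg _), norm_sub_smul_sq]
  constructor <;> intro h <;> linarith

theorem abs_inner_div_norm_le_half_norm_iff (v a : E) :
    |⟪v, a⟫| / ‖a‖ ≤ ‖a‖ / 2 ↔ 2 * |⟪v, a⟫| ≤ ‖a‖ ^ 2 := by
  rcases eq_or_ne a 0 with rfl | ha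
  · simp
  rw [div_le_div_iff₀ (norm_pos_iff.mpr ha) two_pos]
  constructor <;> intro h <;> linarith

end InnerProductSpace

theorem forall_int_two_mul_mul_le_sq_mul_iff (c b : ℝ) :
    (∀ k : ℤ, 2 * k * c ≤ k ^ 2 * b) ↔ 2 * |c| ≤ b := by
  constructor
  · intro h
    have h₁ := h 1
    have h₂ := h (-1)
    push_cast at h₁ h₂
    rcases abs_cases c with ⟨hc, _⟩ | ⟨hc, _⟩ <;> linarith
  · intro h k
    have hb : 0 ≤ b := le_trans (by positivity) h
    have hk : |(k : ℝ)| ≤ (k : ℝ) ^ 2 := by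
      have := Int.natAbs_le_self_sq k
      rw [Int.natCast_natAbs] at this
      exact_mod_cast this
    calc 2 * k * c = 2 * (k * c) := by ring
      _ ≤ 2 * |k * c| := by gcongr; exact le_abs_self _
      _ = |(k : ℝ)| * (2 * |c|) := by rw [abs_mul]; ring
      _ ≤ (k : ℝ) ^ 2 * b := mul_le_mul hk h (by positivity) (sq_nonneg _)

theorem cylinder_segment_shortest_iff_general (a x y : EuclideanSpace ℝ (Fin 2)) :
    (∀ k : ℤ, ‖x - y‖ ≤ ‖x - y - k • a‖) ↔ |⟪x - y, a⟫| / ‖a‖ ≤ ‖a‖ / 2 := by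
  rw [abs_inner_div_norm_le_half_norm_iff, ← forall_int_two_mul_mul_le_sq_mul_iff]
  refine forall_congr' fun k => ?_
  rw [← Int.cast_smul_eq_zsmul ℝ, norm_le_norm_sub_smul_iff]

/-- On the flat cylinder `ℝ²/⟨a⟩`, the planar segment from `x` to `y` projects to a shortest
path (it realizes the quotient distance, i.e. `‖x - y‖ ≤ ‖x - y - k • a‖` for all `k ∈ ℤ`)
if and only if the projection of `x - y` onto the direction of `a` has length at most
`|a|/2`. -/
theorem cylinder_segment_shortest_iff (a x y : EuclideanSpace ℝ (Fin 2)) (ha : a ≠ 0) :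
    (∀ k : ℤ, ‖x - y‖ ≤ ‖x - y - k • a‖) ↔ |⟪x - y, a⟫| / ‖a‖ ≤ ‖a‖ / 2 :=
  cylinder_segment_shortest_iff_general a x y
end

section
/- On the flat torus ℝ²/(ℤa ⊕ ℤb) generated by orthogonal vectors a and b, the planar segment from x to y projects to a shortest geodesic between the corresponding points if and only if |⟨x − y, a⟩|/|a| ≤ |a|/2 and |⟨x − y, b⟩|/|b| ≤ |b|/2. -/
open scoped RealInnerProductSpace

lemma abs_int_le_sq (m : ℤ) : |(m:ℝ)| ≤ (m:ℝ)^2 := by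
  rcases eq_or_ne m 0 with h | h
  · simp [h]
  · have h1 : (1:ℝ) ≤ |(m:ℝ)| := by
      have := Int.one_le_abs h
      calc (1:ℝ) ≤ (|m| : ℤ) := by exact_mod_cast this
        _ = |(m:ℝ)| := by push_cast; ring
    nlinarith [sq_abs ((m:ℝ))]

/-- On the flat torus `ℝ²/(ℤa ⊕ ℤb)` with `a ⊥ b`, the planar segment from `x` to `y`
projects to a shortest geodesic (i.e. `‖x - y‖ ≤ ‖x - y - λ‖` for every lattice vector
`λ = m • a + k • b`) if and only if the projections of `x - y` onto the directions of `a`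
and `b` have lengths at most `|a|/2` and `|b|/2` respectively. -/
theorem torus_segment_shortest_iff (a b x y : EuclideanSpace ℝ (Fin 2))
    (ha : a ≠ 0) (hb : b ≠ 0) (hab : ⟪a, b⟫ = 0) :
    (∀ m k : ℤ, ‖x - y‖ ≤ ‖x - y - m • a - k • b‖) ↔
      (|⟪x - y, a⟫| / ‖a‖ ≤ ‖a‖ / 2 ∧ |⟪x - y, b⟫| / ‖b‖ ≤ ‖b‖ / 2) := by
  set v := x - y with hv
  have hba : ⟪b, a⟫ = 0 := by rwa [real_inner_comm]
  have hapos : (0:ℝ) < ‖a‖ := norm_pos_iff.mpr ha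
  have hbpos : (0:ℝ) < ‖b‖ := norm_pos_iff.mpr hb
  have key : ∀ m k : ℤ, ‖v - m • a - k • b‖^2 =
      ‖v‖^2 + ((m:ℝ)^2 * ‖a‖^2 - 2*(m:ℝ)*⟪v,a⟫) + ((k:ℝ)^2*‖b‖^2 - 2*(k:ℝ)*⟪v,b⟫) := by
    intro m k
    rw [← Int.cast_smul_eq_zsmul ℝ m a, ← Int.cast_smul_eq_zsmul ℝ k b]
    rw [← real_inner_self_eq_norm_sq, ← real_inner_self_eq_norm_sq,
        ← real_inner_self_eq_norm_sq, ← real_inner_self_eq_norm_sq]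
    simp only [inner_sub_sub_self, inner_sub_left, inner_sub_right,
      real_inner_smul_left, real_inner_smul_right, hab, hba]
    ring_nf
    rw [real_inner_comm a v, real_inner_comm b v]
    ring
  have sqiff : ∀ m k : ℤ, (‖v‖ ≤ ‖v - m • a - k • b‖ ↔
      0 ≤ ((m:ℝ)^2 * ‖a‖^2 - 2*(m:ℝ)*⟪v,a⟫) + ((k:ℝ)^2*‖b‖^2 - 2*(k:ℝ)*⟪v,b⟫)) := by
    intro m k
    rw [← pow_le_pow_iff_left₀ (norm_nonneg _) (norm_nonneg _) two_ne_zero, key m k]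
    constructor <;> intro h <;> nlinarith
  constructor
  · intro H
    have h1 := (sqiff 1 0).mp (H 1 0)
    have h2 := (sqiff (-1) 0).mp (H (-1) 0)
    have h3 := (sqiff 0 1).mp (H 0 1)
    have h4 := (sqiff 0 (-1)).mp (H 0 (-1))
    push_cast at h1 h2 h3 h4
    constructor
    · rw [div_le_div_iff₀ hapos two_pos]
      rcases abs_cases (⟪v,a⟫ : ℝ) with ⟨h,_⟩|⟨h,_⟩ <;> nlinarith
    · rw [div_le_div_iff₀ hbpos two_pos]
      rcases abs_cases (⟪v,b⟫ : ℝ) with ⟨h,_⟩|⟨h,_⟩ <;> nlinarith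
  · rintro ⟨h1, h2⟩ m k
    rw [div_le_div_iff₀ hapos two_pos] at h1
    rw [div_le_div_iff₀ hbpos two_pos] at h2
    rw [sqiff m k]
    have hm := abs_int_le_sq m
    have hk := abs_int_le_sq k
    have e1 : (m:ℝ)*⟪v,a⟫ ≤ |(m:ℝ)| * |⟪v,a⟫| := by
      rw [← abs_mul]; exact le_abs_self _
    have e2 : (k:ℝ)*⟪v,b⟫ ≤ |(k:ℝ)| * |⟪v,b⟫| := by
      rw [← abs_mul]; exact le_abs_self _
    nlinarith [abs_nonneg (⟪v,a⟫), abs_nonneg (⟪v,b⟫), abs_nonneg ((m:ℝ)), abs_nonneg ((k:ℝ)), sq_nonneg (‖a‖), sq_nonneg (‖b‖)]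
end
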